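/- Let $\alpha = \sqrt[3]{16} \in \mathbb{R}$, let $R = \mathbb{Z}[\alpha]$ be the subring of $\mathbb{R}$ generated by $\alpha$, and let $K = \mathbb{Q}(\alpha)$ be its field of fractions. Let $A = \begin{pmatrix} 0 & 2 & \alpha \\ 2\alpha & 0 & 4 \\ 4 & \alpha & 0 \end{pmatrix} \in \mathrm{M}_3(R)$. Then there is no matrix $B = (b_{ij}) \in \mathrm{M}_3(R)$ with $b_{ij} = 1$ for some pair of indices $i \neq j$ such that $A$ and $B$, viewed as matrices over $K$, are $K$-similar. -/

import Mathlib

open Polynomial in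
lemma no_rat_cube_root_16 (b : ℚ) : b ^ 3 ≠ 16 := by
  intro hb
  have hb3 : ((b:ℝ)) ^ 3 = ((16:ℤ) : ℝ) := by push_cast; rw [← Rat.cast_pow, hb]; norm_num
  have hni : ¬ Irrational (b : ℝ) := Rat.not_irrational b
  have : ∃ y : ℤ, (b:ℝ) = y := by
    by_contra h
    exact hni (irrational_nrt_of_notint_nrt 3 16 hb3 h (by norm_num))
  obtain ⟨y, hy⟩ := this
  have hyz : y ^ 3 = 16 := by
    have : ((y:ℝ)) ^ 3 = 16 := by rw [← hy]; exact_mod_cast hb3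
    exact_mod_cast this
  have h1 : 0 < y := by nlinarith [sq_nonneg y, sq_nonneg (y - 2), sq_nonneg (y + 2)]
  have h2 : y ≤ 2 := by nlinarith [sq_nonneg y, sq_nonneg (y - 2), sq_nonneg (y + 2)]
  interval_cases y <;> omega

open Polynomial in
lemma lin_indep_16 (α : ℝ) (hα3 : α ^ 3 = 16) (p q r : ℚ)
    (h : (p:ℝ) + q * α + r * α ^ 2 = 0) : p = 0 ∧ q = 0 ∧ r = 0 := by
  by_contra hc
  have hmin : minpoly ℚ α = X ^ 3 - C 16 := by
    refine (minpoly.eq_of_irreducible_of_monic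
      (X_pow_sub_C_irreducible_of_prime (by norm_num) (fun b => no_rat_cube_root_16 b)) ?_ ?_).symm
    · simp [hα3]
    · exact (monic_X_pow_sub_C _ (by norm_num))
  set P : ℚ[X] := C p + C q * X + C r * X ^ 2 with hP
  have hPne : P ≠ 0 := by
    intro h0
    apply hc
    have hc0 := congrArg (fun f => Polynomial.coeff f 0) h0
    have hc1 := congrArg (fun f => Polynomial.coeff f 1) h0
    have hc2 := congrArg (fun f => Polynomial.coeff f 2) h0
    simp [hP, coeff_add, coeff_C, coeff_X, coeff_X_pow] at hc0 hc1 hc2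
    exact ⟨hc0, hc1, hc2⟩
  have haev : Polynomial.aeval α P = 0 := by
    simp [hP, map_add, map_mul]
    linarith [h]
  have hd := minpoly.degree_le_of_ne_zero ℚ α hPne haev
  rw [hmin] at hd
  have h3 : degree (X ^ 3 - C (16:ℚ)) = 3 := by
    rw [degree_X_pow_sub_C (by norm_num)]; rfl
  have hPd : degree P ≤ 2 := by
    have : P = C r * X ^ 2 + C q * X + C p := by ring
    rw [this]; exact degree_quadratic_le
  rw [h3] at hd
  have : (3 : WithBot ℕ) ≤ 2 := le_trans hd hPd
  norm_num at this

lemma repr_closure (α : ℝ) (hα3 : α ^ 3 = 16) {x : ℝ} (hx : x ∈ Subring.closure {α}) :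
    ∃ c0 c1 c2 : ℤ, x = c0 + c1 * α + c2 * α ^ 2 := by
  induction hx using Subring.closure_induction with
  | mem y hy =>
    rw [Set.mem_singleton_iff] at hy
    exact ⟨0, 1, 0, by simp [hy]⟩
  | zero => exact ⟨0, 0, 0, by simp⟩
  | one => exact ⟨1, 0, 0, by simp⟩
  | add x y hx hy ihx ihy =>
    obtain ⟨x0, x1, x2, rfl⟩ := ihx
    obtain ⟨y0, y1, y2, rfl⟩ := ihy
    exact ⟨x0 + y0, x1 + y1, x2 + y2, by push_cast; ring⟩
  | neg x hx ihx =>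
    obtain ⟨x0, x1, x2, rfl⟩ := ihx
    exact ⟨-x0, -x1, -x2, by push_cast; ring⟩
  | mul x y hx hy ihx ihy =>
    obtain ⟨x0, x1, x2, rfl⟩ := ihx
    obtain ⟨y0, y1, y2, rfl⟩ := ihy
    refine ⟨x0 * y0 + 16 * (x1 * y2 + x2 * y1), x0 * y1 + x1 * y0 + 16 * (x2 * y2),
      x0 * y2 + x1 * y1 + x2 * y0, ?_⟩
    push_cast
    linear_combination ((x1:ℝ) * y2 + x2 * y1 + x2 * y2 * α) * hα3
lemma key_matrix {F : Type*} [Field F] [CharZero F] (a : F) (ha3 : a ^ 3 = 16)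
    (A B : Matrix (Fin 3) (Fin 3) F) (hA : A = !![0, 2, a; 2 * a, 0, 4; 4, a, 0])
    (g : (Matrix (Fin 3) (Fin 3) F)ˣ)
    (hg : (g : Matrix (Fin 3) (Fin 3) F) * A * (↑g⁻¹ : Matrix (Fin 3) (Fin 3) F) = B)
    (i j : Fin 3) (hij : i ≠ j) (hBij : B i j = 1) :
    B i 0 * B 0 j + B i 1 * B 1 j + B i 2 * B 2 j = a ^ 2 / 2 := by
  have hA2 : A * A = (a ^ 2 / 2) • A + (8 * a) • (1 : Matrix (Fin 3) (Fin 3) F) := by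
    subst hA
    ext i j
    fin_cases i <;> fin_cases j <;>
      simp [Matrix.mul_apply, Fin.sum_univ_three, Matrix.one_apply] <;>
      first
        | linear_combination (-1/2 : F) * ha3
        | linear_combination (-1 : F) * ha3
        | linear_combination (-3/2 : F) * ha3
        | linear_combination (1/2 : F) * ha3
        | linear_combination (1 : F) * ha3
        | ring1
  set G : Matrix (Fin 3) (Fin 3) F := (g : Matrix (Fin 3) (Fin 3) F) with hG
  set Gi : Matrix (Fin 3) (Fin 3) F := (↑g⁻¹ : Matrix (Fin 3) (Fin 3) F) with hGi
  have hiv : Gi * G = 1 := g.inv_mul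
  have hvi : G * Gi = 1 := g.mul_inv
  have hBB : B * B = (a ^ 2 / 2) • B + (8 * a) • (1 : Matrix (Fin 3) (Fin 3) F) := by
    rw [← hg]
    have e1 : (G * A * Gi) * (G * A * Gi) = G * (A * A) * Gi := by
      simp only [mul_assoc]
      rw [← mul_assoc Gi G, hiv, one_mul]
    rw [e1, hA2]
    simp only [Matrix.mul_add, Matrix.add_mul, Matrix.smul_mul, Matrix.mul_smul,
      Matrix.mul_one, hvi, hg]
  have h2 := congrFun (congrFun hBB i) j
  rw [Matrix.mul_apply, Fin.sum_univ_three] at h2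
  rw [h2]
  simp [Matrix.one_apply_ne hij, hBij, smul_eq_mul]

open IntermediateField in
/-- Let `α = 16^(1/3)`, `R = ℤ[α] ⊆ ℝ`, `K = ℚ(α)`, and
`A = !![0, 2, α; 2α, 0, 4; 4, α, 0] ∈ M₃(R)`. Then there is no matrix `B ∈ M₃(R)` with an
off-diagonal entry equal to `1` such that `A` and `B`, viewed over `K`, are `K`-similar.
Here `a : K` is the element of `K` corresponding to `α ∈ ℝ`, and "entries in `R`" is expressed
by membership of the real entries in `Subring.closure {α}`. -/
theorem not_similar_to_matrix_with_offdiagonal_one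
    (α : ℝ) (hα : α = (16 : ℝ) ^ ((1 : ℝ) / 3))
    (a : ℚ⟮α⟯) (ha : (a : ℝ) = α)
    (A : Matrix (Fin 3) (Fin 3) ℚ⟮α⟯)
    (hA : A = !![0, 2, a; 2 * a, 0, 4; 4, a, 0]) :
    ¬ ∃ B : Matrix (Fin 3) (Fin 3) ℚ⟮α⟯,
      (∀ i j, (B i j : ℝ) ∈ Subring.closure {α}) ∧
      (∃ i j : Fin 3, i ≠ j ∧ B i j = 1) ∧
      ∃ g : (Matrix (Fin 3) (Fin 3) ℚ⟮α⟯)ˣ,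
        (g : Matrix (Fin 3) (Fin 3) ℚ⟮α⟯) * A * (↑g⁻¹ : Matrix (Fin 3) (Fin 3) ℚ⟮α⟯) = B := by
  rintro ⟨B, hBR, ⟨i, j, hij, hBij⟩, g, hg⟩
  have hα3 : α ^ 3 = 16 := by
    rw [hα, ← Real.rpow_natCast _ 3, ← Real.rpow_mul (by norm_num)]
    norm_num
  have ha3 : a ^ 3 = 16 := by
    have h16 : ((a ^ 3 : ℚ⟮α⟯) : ℝ) = ((16 : ℚ⟮α⟯) : ℝ) := by push_cast [ha]; exact_mod_cast hα3
    exact_mod_cast h16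
  have hsum := key_matrix a ha3 A B hA g hg i j hij hBij
  have hmem : ((B i 0 * B 0 j + B i 1 * B 1 j + B i 2 * B 2 j : ℚ⟮α⟯) : ℝ)
      ∈ Subring.closure {α} := by
    push_cast
    exact add_mem (add_mem (mul_mem (hBR i 0) (hBR 0 j)) (mul_mem (hBR i 1) (hBR 1 j)))
      (mul_mem (hBR i 2) (hBR 2 j))
  have hval : ((B i 0 * B 0 j + B i 1 * B 1 j + B i 2 * B 2 j : ℚ⟮α⟯) : ℝ) = α ^ 2 / 2 := by
    have h2 : (((B i 0 * B 0 j + B i 1 * B 1 j + B i 2 * B 2 j)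
          + (B i 0 * B 0 j + B i 1 * B 1 j + B i 2 * B 2 j) : ℚ⟮α⟯) : ℝ)
        = ((a ^ 2 : ℚ⟮α⟯) : ℝ) := by
      congr 1
      rw [hsum]
      ring
    push_cast [ha] at h2 ⊢
    linarith
  rw [hval] at hmem
  obtain ⟨c0, c1, c2, hc⟩ := repr_closure α hα3 hmem
  have hli := lin_indep_16 α hα3 (c0 : ℚ) (c1 : ℚ) ((c2 : ℚ) - 1/2) (by push_cast; linarith)
  have h12 : ((c2 : ℚ)) = 1/2 := by linarith [hli.2.2]
  have : ((2 * c2 : ℤ) : ℚ) = 1 := by push_cast; linarith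
  have : (2 * c2 : ℤ) = 1 := by exact_mod_cast this
  omega
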